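/- For integers k ≥ 1 and n ≥ 0, B_n^{(-k)} = Σ_{m=0}^{k-1} (-1)^{k-m-1} · binom(k,m) · B_n^{(-m,0)}, where B_n^{(-m,0)} = Σ_{l=1}^{m} (-1)^{l+m} l! S(m,l) (l+2)^n for m ≥ 1 and B_n^{(0,0)} = 2^n. -/

import Mathlib

open Finset

/-- Stirling numbers of the second kind. -/
def S2 : ℕ → ℕ → ℕ
  | 0, 0 => 1
  | 0, _ + 1 => 0
  | _ + 1, 0 => 0
  | n + 1, k + 1 => S2 n k + (k + 1) * S2 n (k + 1)

/-- Unsigned Stirling numbers of the first kind. -/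
def S1 : ℕ → ℕ → ℕ
  | 0, 0 => 1
  | 0, _ + 1 => 0
  | _ + 1, 0 => 0
  | n + 1, k + 1 => S1 n k + n * S1 n (k + 1)

/-- Poly-Bernoulli number of negative index `B_n^{(-k)}` (closed power-sum formula). -/
def polyB (n k : ℕ) : ℤ :=
  ∑ l ∈ Finset.Icc 1 k, (-1 : ℤ) ^ (l + k) * (Nat.factorial l) * S2 k l * ((l : ℤ) + 1) ^ n

/-- Rising factorial `(r)_l = r (r+1) ⋯ (r+l-1)`. -/
def risingFact (r l : ℕ) : ℕ := ∏ i ∈ Finset.range l, (r + i)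

/-- Multi-poly-Bernoulli number `B_n^{(-m,0)}`. -/
def B2left (n m : ℕ) : ℤ :=
  if m = 0 then 2 ^ n
  else ∑ l ∈ Finset.Icc 1 m,
    (-1 : ℤ) ^ (l + m) * (Nat.factorial l) * S2 m l * ((l : ℤ) + 2) ^ n

/-!
Expand `B_n^{(-m,0)}` and interchange the two sums. The signs combine to one depending only
on `l`, and the remaining sum `∑_{m<k} C(k,m) S(m,l)` equals `(l+1) S(k,l+1)`, by the recurrence
`S(k+1,l+1) = ∑_{m≤k} C(k,m) S(m,l)`. Since `(l+1)·l! = (l+1)!`, shifting `l` gives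
the power-sum formula for `B_n^{(-k)}`.
-/

open Nat

theorem S2_eq_stirlingSecond : S2 = stirlingSecond := by
  funext n k
  induction n generalizing k with
  | zero => cases k <;> rfl
  | succ n ih =>
    cases k with
    | zero => rfl
    | succ k => rw [S2, stirlingSecond_succ_succ, ih, ih, add_comm]

theorem Nat.sum_range_succ_choose_mul_stirlingSecond (n j : ℕ) :
    ∑ m ∈ range (n + 1), n.choose m * stirlingSecond m j = stirlingSecond (n + 1) (j + 1) := by
  induction n generalizing j with
  | zero => cases j <;> simp [stirlingSecond]
  | succ n ih =>
    have pascal := sum_choose_succ_mul (R := ℕ) (fun m _ => stirlingSecond m j) n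
    simp only [Nat.cast_id] at pascal
    rw [pascal, ih]
    cases j with
    | zero => simp [stirlingSecond_succ_succ]
    | succ j =>
      have shifted : ∑ m ∈ range (n + 1), n.choose m * stirlingSecond (m + 1) (j + 1)
          = (j + 1) * stirlingSecond (n + 1) (j + 2) + stirlingSecond (n + 1) (j + 1) := by
        simp only [stirlingSecond_succ_succ, mul_add, sum_add_distrib, mul_left_comm _ (j + 1),
          ← mul_sum, ih]
      rw [shifted, stirlingSecond_succ_succ (n + 1) (j + 1)]
      ring

theorem Nat.sum_range_choose_mul_stirlingSecond (n j : ℕ) :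
    ∑ m ∈ range n, n.choose m * stirlingSecond m j = (j + 1) * stirlingSecond n (j + 1) := by
  have h := sum_range_succ_choose_mul_stirlingSecond n j
  rw [sum_range_succ, choose_self, one_mul, stirlingSecond_succ_succ] at h
  omega

theorem sum_Icc_signed_stirlingSecond_eq_sum_range_choose {R : Type*} [CommRing R]
    (g : ℕ → R) (k : ℕ) :
    ∑ l ∈ Icc 1 k, (-1 : R) ^ (l + k) * l ! * stirlingSecond k l * g l =
      ∑ m ∈ range k, (-1 : R) ^ (k - m - 1) * k.choose m *
        ∑ l ∈ range (m + 1), (-1 : R) ^ (l + m) * l ! * stirlingSecond m l * g (l + 1) := by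
  cases k with
  | zero => simp
  | succ K =>
  have combine : ∀ m ∈ range (K + 1), (-1 : R) ^ (K + 1 - m - 1) * (K + 1).choose m *
        ∑ l ∈ range (m + 1), (-1 : R) ^ (l + m) * l ! * stirlingSecond m l * g (l + 1) =
      ∑ l ∈ range (K + 1), (-1 : R) ^ (K + l) * l ! * g (l + 1) *
        ((K + 1).choose m * stirlingSecond m l : ℕ) := by
    intro m hm
    obtain ⟨d, rfl⟩ := Nat.exists_eq_add_of_le (Nat.lt_succ_iff.mp (mem_range.mp hm))
    rw [mul_sum, ← sum_subset (range_subset_range.mpr (by omega : m + 1 ≤ m + d + 1))]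
    · refine sum_congr rfl fun l _ => ?_
      rw [show m + d + 1 - m - 1 = d by omega]
      push_cast
      ring
    · intro l _ hlm
      rw [stirlingSecond_eq_zero_of_lt (by simp_all)]
      simp
  rw [sum_congr rfl combine, sum_comm]
  simp_rw [← mul_sum, ← Nat.cast_sum, sum_range_choose_mul_stirlingSecond]
  rw [← Ico_add_one_right_eq_Icc, sum_Ico_eq_sum_range, add_tsub_cancel_right]
  refine sum_congr rfl fun l _ => ?_
  rw [add_comm 1 l, factorial_succ]
  push_cast
  ring

theorem B2left_eq_sum_range (n m : ℕ) :
    B2left n m =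
      ∑ l ∈ range (m + 1),
        (-1 : ℤ) ^ (l + m) * l ! * stirlingSecond m l * ((l : ℤ) + 2) ^ n := by
  rw [B2left, S2_eq_stirlingSecond]
  split_ifs with hm
  · simp [hm]
  · obtain ⟨m, rfl⟩ := exists_eq_succ_of_ne_zero hm
    rw [range_eq_Ico, sum_eq_sum_Ico_succ_bot (by omega), Ico_add_one_right_eq_Icc]
    simp

theorem stmt_13_general (k n : ℕ) :
    polyB n k =
      ∑ m ∈ Finset.range k,
        (-1 : ℤ) ^ (k - m - 1) * (Nat.choose k m) * B2left n m := by
  rw [polyB, S2_eq_stirlingSecond]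
  refine (sum_Icc_signed_stirlingSecond_eq_sum_range_choose (fun l => ((l : ℤ) + 1) ^ n) k).trans
    (sum_congr rfl fun m _ => ?_)
  rw [B2left_eq_sum_range]
  push_cast
  ring_nf

theorem stmt_13 (k n : ℕ) (hk : 1 ≤ k) :
    polyB n k =
      ∑ m ∈ Finset.range k,
        (-1 : ℤ) ^ (k - m - 1) * (Nat.choose k m) * B2left n m :=
  stmt_13_general k n
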